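/- Fix δ ∈ (0, 1/2) and assume c_2 := E(m^{(1−δ)X_0^*}) < ∞. Then for every p ∈ (0,1), every integer k ≥ 1 and every integer n ≥ 1, |d^k/dp^k P(X_n = 0)| ≤ 2^k · k! · m^{kn} · P( Σ_{i=1}^{m^n − k} X_{0,i} ≤ m^n ), where X_{0,i}, i ≥ 1, are independent copies of X_0. -/

import Mathlib

noncomputable section

/-- One step of the Derrida–Retaux recursion on probability mass functions on ℕ. -/
def drStep (m : ℕ) (μ : ℕ → ℝ) : ℕ → ℝ :=
  fun j => ∑' x : Fin m → ℕ, if (∑ i, x i) - 1 = j then ∏ i, μ (x i) else 0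

/-- The mass function of `X_0`, namely `(1 - p)·δ_0 + p·ν`. -/
def mix (ν : ℕ → ℝ) (p : ℝ) : ℕ → ℝ :=
  fun k => (1 - p) * (if k = 0 then 1 else 0) + p * ν k

/-- The mass function of `X_n`. -/
def drLaw (m : ℕ) (ν : ℕ → ℝ) (p : ℝ) (n : ℕ) : ℕ → ℝ :=
  (drStep m)^[n] (mix ν p)

/-- `sumLaw μ N` is the mass function of the sum of `N` independent copies of a
random variable with mass function `μ` (the `N`-fold convolution of `μ`). -/
def sumLaw (μ : ℕ → ℝ) : ℕ → ℕ → ℝ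
  | 0, j => if j = 0 then 1 else 0
  | N + 1, j => ∑ a ∈ Finset.range (j + 1), μ a * sumLaw μ N (j - a)

/-!
Unrolling the recursion `n` times, `X_n` is the value at the root of an `m`-ary tree of depth
`n` whose `m ^ n` leaves carry independent copies of `X_0`. Hence `P(X_n = 0)` is a finite sum,
over the leaf configurations `x` with root value `0`, of `∏ₜ P(X_0 = xₜ)`, and each factor is
affine in `p` with slope `ν - δ₀`. The `k`-th derivative of such a product is `k!` times a sum
over the `k`-sets `U` of leaves of `∏_{t ∈ U} (ν - δ₀)(xₜ) · ∏_{t ∉ U} P(X_0 = xₜ)`.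
A vanishing root forces `∑ₜ xₜ ≤ m ^ n`; keeping only this constraint on the leaves outside `U`,
the leaves in `U` contribute at most `(∑ₐ |ν a - δ₀ a|) ^ k ≤ 2 ^ k` and the others
`P(X_{0,1} + ⋯ + X_{0,m^n-k} ≤ m ^ n)`, while there are `(m ^ n).choose k ≤ m ^ (k n)` sets `U`.
-/

open Finset Polynomial
open scoped ENNReal

namespace DerridaRetaux

/-- The root value of the depth-`n` recursion tree whose leaf at the path `t : Fin n → Fin m`
carries the value `x t`. -/
def treeValue (m : ℕ) : (n : ℕ) → ((Fin n → Fin m) → ℕ) → ℕ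
  | 0, x => x Fin.elim0
  | n + 1, x => (∑ i, treeValue m n fun t => x (Fin.cons i t)) - 1

lemma treeValue_zero (m : ℕ) (x : (Fin 0 → Fin m) → ℕ) : treeValue m 0 x = x default :=
  congrArg x (Subsingleton.elim _ _)

@[to_additive]
lemma prod_fun_fin_succ {α M : Type*} [Fintype α] [CommMonoid M] {n : ℕ}
    (f : (Fin (n + 1) → α) → M) : ∏ t, f t = ∏ i, ∏ t : Fin n → α, f (Fin.cons i t) := by
  rw [← (Fin.consEquiv fun _ => α).prod_comp, Fintype.prod_prod_type]
  rfl

lemma sum_le_treeValue_add_geom_sum (m : ℕ) :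
    ∀ (n : ℕ) (x : (Fin n → Fin m) → ℕ), ∑ t, x t ≤ treeValue m n x + ∑ i ∈ range n, m ^ i
  | 0, x => by simp [treeValue_zero]
  | n + 1, x => by
    have hsub := sum_le_sum fun i (_ : i ∈ univ) =>
      sum_le_treeValue_add_geom_sum m n fun t => x (Fin.cons i t)
    rw [sum_add_distrib, sum_const, card_univ, Fintype.card_fin, smul_eq_mul] at hsub
    rw [sum_fun_fin_succ, treeValue, geom_sum_succ]
    omega

lemma sum_le_pow_of_treeValue_eq_zero {m n : ℕ} (hm : 2 ≤ m) {x : (Fin n → Fin m) → ℕ}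
    (hx : treeValue m n x = 0) : ∑ t, x t ≤ m ^ n := by
  have := sum_le_treeValue_add_geom_sum m n x
  have := Nat.geomSum_lt hm (s := range n) fun k hk => mem_range.mp hk
  omega

/-- Leaf configurations with root value `0`. Leaf values are taken in `Fin (m ^ n + 1)`, which
loses none of them by `sum_le_pow_of_treeValue_eq_zero`. -/
def zeroConfigs (m n : ℕ) : Finset ((Fin n → Fin m) → Fin (m ^ n + 1)) :=
  univ.filter fun x => treeValue m n (fun t => x t) = 0

lemma sum_le_pow_of_mem_zeroConfigs {m n : ℕ} (hm : 2 ≤ m) {x : (Fin n → Fin m) → Fin (m ^ n + 1)}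
    (hx : x ∈ zeroConfigs m n) : ∑ t, (x t : ℕ) ≤ m ^ n :=
  sum_le_pow_of_treeValue_eq_zero hm (mem_filter.mp hx).2

/-- `drStep` on `ℝ≥0∞`-valued mass functions, where series can be rearranged freely. -/
def drStepENN (m : ℕ) (μ : ℕ → ℝ≥0∞) : ℕ → ℝ≥0∞ :=
  fun j => ∑' x : Fin m → ℕ, if (∑ i, x i) - 1 = j then ∏ i, μ (x i) else 0

lemma prod_tsum_eq_tsum_pi {β : Type*} :
    ∀ (M : ℕ) (f : Fin M → β → ℝ≥0∞), ∏ i, ∑' b, f i b = ∑' g : Fin M → β, ∏ i, f i (g i)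
  | 0, f => by simp
  | M + 1, f => by
    rw [Fin.prod_univ_succ, prod_tsum_eq_tsum_pi M, ← (Fin.consEquiv _).tsum_eq,
      ENNReal.tsum_prod', ← ENNReal.tsum_mul_right]
    refine tsum_congr fun b => ?_
    rw [← ENNReal.tsum_mul_left]
    simp [Fin.prod_univ_succ]

/-- The law of `h (f Y₁, …, f Yₘ)` for independent `Yᵢ` with weights `w`, computed from the law
of `f Y`. -/
lemma tsum_ite_prod_tsum_ite {α β γ : Type*} [DecidableEq β] [DecidableEq γ] {m : ℕ}
    (f : α → β) (w : α → ℝ≥0∞) (h : (Fin m → β) → γ) (c : γ) :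
    ∑' z : Fin m → β, (if h z = c then ∏ i, ∑' y, (if f y = z i then w y else 0) else 0) =
      ∑' Y : Fin m → α, if h (f ∘ Y) = c then ∏ i, w (Y i) else 0 := by
  calc _ = ∑' z : Fin m → β, ∑' Y : Fin m → α,
        if h z = c then (if f ∘ Y = z then ∏ i, w (Y i) else 0) else 0 := by
        refine tsum_congr fun z => ?_
        rw [prod_tsum_eq_tsum_pi]
        split_ifs
        · simp only [Fintype.prod_ite_zero, funext_iff, Function.comp_apply]
          exact tsum_congr fun _ => by congr
        · simp
    _ = _ := by
      rw [ENNReal.tsum_comm]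
      refine tsum_congr fun Y => ?_
      rw [tsum_eq_single (f ∘ Y) fun z hz => by simp [Ne.symm hz]]
      simp

lemma drStepENN_iterate (m : ℕ) (μ : ℕ → ℝ≥0∞) : ∀ (n j : ℕ),
    (drStepENN m)^[n] μ j =
      ∑' x : (Fin n → Fin m) → ℕ, if treeValue m n x = j then ∏ t, μ (x t) else 0
  | 0, j => by
    rw [← (Equiv.funUnique (Fin 0 → Fin m) ℕ).symm.tsum_eq]
    simp [treeValue_zero]
  | n + 1, j => by
    simp only [Function.iterate_succ_apply', drStepENN, drStepENN_iterate m μ n]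
    rw [tsum_ite_prod_tsum_ite]
    let e : ((Fin (n + 1) → Fin m) → ℕ) ≃ (Fin m → (Fin n → Fin m) → ℕ) :=
      ((Fin.consEquiv fun _ => Fin m).arrowCongr (Equiv.refl ℕ)).symm.trans
        (Equiv.curry _ _ _)
    rw [← e.tsum_eq]
    refine tsum_congr fun x => ?_
    have hex : e x = fun i t => x (Fin.cons i t) := rfl
    rw [hex, prod_fun_fin_succ]
    rfl

lemma tsum_drStepENN (m : ℕ) (μ : ℕ → ℝ≥0∞) : ∑' j, drStepENN m μ j = (∑' a, μ a) ^ m := by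
  unfold drStepENN
  rw [ENNReal.tsum_comm]
  simp_rw [tsum_ite_eq']
  rw [← prod_tsum_eq_tsum_pi, prod_const, card_univ, Fintype.card_fin]

lemma tsum_drStepENN_iterate {m : ℕ} {μ : ℕ → ℝ≥0∞} (hμ : ∑' a, μ a = 1) (n : ℕ) :
    ∑' j, (drStepENN m)^[n] μ j = 1 := by
  induction n with
  | zero => exact hμ
  | succ n ih => rw [Function.iterate_succ_apply', tsum_drStepENN, ih, one_pow]

lemma drStep_toReal (m : ℕ) {μ : ℕ → ℝ≥0∞} (hμ : ∀ a, μ a ≠ ∞) (j : ℕ) :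
    drStep m (fun a => (μ a).toReal) j = (drStepENN m μ j).toReal := by
  rw [drStep, drStepENN, ENNReal.tsum_toReal_eq fun x => by
    split_ifs
    exacts [ENNReal.prod_ne_top fun i _ => hμ _, ENNReal.zero_ne_top]]
  refine tsum_congr fun x => ?_
  split_ifs <;> simp [ENNReal.toReal_prod]

lemma drStep_iterate_toReal (m : ℕ) {μ : ℕ → ℝ≥0∞} (hμ : ∑' a, μ a = 1) (n : ℕ) :
    (drStep m)^[n] (fun a => (μ a).toReal) = fun j => ((drStepENN m)^[n] μ j).toReal := by
  induction n with
  | zero => rfl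
  | succ n ih =>
    have hfin := ENNReal.ne_top_of_tsum_ne_top
      ((tsum_drStepENN_iterate (m := m) hμ n).trans_ne ENNReal.one_ne_top)
    ext j
    rw [Function.iterate_succ_apply', Function.iterate_succ_apply', ih, drStep_toReal m hfin]

lemma summable_of_tsum_eq_one {μ : ℕ → ℝ} (h : ∑' a, μ a = 1) : Summable μ := by
  by_contra hμ
  simp [tsum_eq_zero_of_not_summable hμ] at h

lemma drStep_iterate_zero_eq_sum {m : ℕ} (hm : 2 ≤ m) {μ : ℕ → ℝ} (hμ0 : ∀ a, 0 ≤ μ a)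
    (hμ1 : ∑' a, μ a = 1) (n : ℕ) :
    (drStep m)^[n] μ 0 = ∑ x ∈ zeroConfigs m n, ∏ t, μ (x t) := by
  set μE : ℕ → ℝ≥0∞ := fun a => ENNReal.ofReal (μ a)
  have hμE : ∑' a, μE a = 1 := by
    rw [← ENNReal.ofReal_tsum_of_nonneg hμ0 (summable_of_tsum_eq_one hμ1), hμ1,
      ENNReal.ofReal_one]
  have hμ : μ = fun a => (μE a).toReal := funext fun a => (ENNReal.toReal_ofReal (hμ0 a)).symm
  have hinj : Function.Injective fun (x : (Fin n → Fin m) → Fin (m ^ n + 1)) t => (x t : ℕ) :=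
    fun x y hxy => funext fun t => Fin.ext (congrFun hxy t)
  rw [hμ, drStep_iterate_toReal m hμE]
  beta_reduce
  rw [drStepENN_iterate, ← hinj.tsum_eq, tsum_fintype, zeroConfigs, sum_filter,
    ENNReal.toReal_sum fun x _ => by
      split_ifs
      exacts [ENNReal.prod_ne_top fun _ _ => ENNReal.ofReal_ne_top, ENNReal.zero_ne_top]]
  · refine sum_congr rfl fun x _ => ?_
    split_ifs <;> simp [ENNReal.toReal_prod]
  · intro y hy
    have hy0 : treeValue m n y = 0 := by by_contra h; simp [h] at hy
    exact ⟨fun t => ⟨y t, Nat.lt_succ_of_le <| (single_le_sum (fun _ _ => Nat.zero_le _)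
      (mem_univ t)).trans (sum_le_pow_of_treeValue_eq_zero hm hy0)⟩, rfl⟩

lemma sumLaw_nonneg {μ : ℕ → ℝ} (hμ : ∀ a, 0 ≤ μ a) : ∀ t j, 0 ≤ sumLaw μ t j
  | 0, j => by rw [sumLaw]; split_ifs <;> norm_num
  | t + 1, j => sum_nonneg fun a _ => mul_nonneg (hμ a) (sumLaw_nonneg hμ t _)

lemma sum_range_sumLaw_succ (μ : ℕ → ℝ) (t M : ℕ) :
    ∑ j ∈ range (M + 1), sumLaw μ (t + 1) j =
      ∑ a ∈ range (M + 1), μ a * ∑ j ∈ range (M + 1 - a), sumLaw μ t j := by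
  change ∑ j ∈ range (M + 1), ∑ a ∈ range (j + 1), μ a * sumLaw μ t (j - a) = _
  simp_rw [range_eq_Ico]
  rw [← sum_Ico_Ico_comm]
  refine sum_congr rfl fun a _ => ?_
  rw [← mul_sum, sum_Ico_eq_sum_range, ← range_eq_Ico]
  simp only [add_tsub_cancel_left]

lemma sum_fin_pi_ite_sum_le {B : ℕ} (μ : ℕ → ℝ) :
    ∀ (t M : ℕ), M ≤ B → ∑ v : Fin t → Fin (B + 1),
      (if ∑ i, (v i : ℕ) ≤ M then ∏ i, μ (v i) else 0) = ∑ j ∈ range (M + 1), sumLaw μ t j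
  | 0, M, _ => by simp [sumLaw]
  | t + 1, M, hM => by
    have hstep : ∀ a : Fin (B + 1), ∑ v : Fin t → Fin (B + 1),
        (if ∑ i, ((Fin.cons a v : Fin (t + 1) → Fin (B + 1)) i : ℕ) ≤ M
          then ∏ i, μ ((Fin.cons a v : Fin (t + 1) → Fin (B + 1)) i) else 0) =
          if (a : ℕ) ≤ M then μ a * ∑ j ∈ range (M + 1 - a), sumLaw μ t j else 0 := by
      intro a
      simp only [Fin.sum_univ_succ, Fin.prod_univ_succ, Fin.cons_zero, Fin.cons_succ]
      split_ifs with ha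
      · rw [show M + 1 - a = M - a + 1 by omega,
          ← sum_fin_pi_ite_sum_le (B := B) μ t (M - a) (by omega), mul_sum]
        refine sum_congr rfl fun v _ => ?_
        simp only [show (a : ℕ) + ∑ i, (v i : ℕ) ≤ M ↔ ∑ i, (v i : ℕ) ≤ M - a by omega]
        split_ifs <;> simp
      · exact sum_eq_zero fun v _ => if_neg (by omega)
    rw [sum_fun_fin_succ, sum_range_sumLaw_succ]
    simp only [hstep]
    rw [Fin.sum_univ_eq_sum_range
      (fun a => if a ≤ M then μ a * ∑ j ∈ range (M + 1 - a), sumLaw μ t j else 0), ← sum_filter,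
      show (range (B + 1)).filter (· ≤ M) = range (M + 1) by ext; simp; omega]

lemma sum_pi_ite_sum_le {ι : Type*} [Fintype ι] [DecidableEq ι] {B M : ℕ} (hM : M ≤ B)
    (μ : ℕ → ℝ) :
    ∑ v : ι → Fin (B + 1), (if ∑ i, (v i : ℕ) ≤ M then ∏ i, μ (v i) else 0) =
      ∑ j ∈ range (M + 1), sumLaw μ (Fintype.card ι) j := by
  let e := Fintype.equivFin ι
  rw [← sum_fin_pi_ite_sum_le μ _ M hM, ← (e.arrowCongr (Equiv.refl _)).sum_comp]
  refine sum_congr rfl fun v _ => ?_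
  simp [Equiv.arrowCongr_apply, e.symm.sum_comp (fun i => (v i : ℕ)),
    e.symm.prod_comp (fun i => μ (v i))]

lemma sum_pi_prod_mul_ite_sum_compl_le {ι : Type*} [Fintype ι] [DecidableEq ι] (U : Finset ι)
    {B M : ℕ} (hM : M ≤ B) (d μ : ℕ → ℝ) :
    ∑ x : ι → Fin (B + 1), (∏ i ∈ U, d (x i)) *
        (if ∑ i ∈ Uᶜ, (x i : ℕ) ≤ M then ∏ i ∈ Uᶜ, μ (x i) else 0) =
      (∑ a ∈ range (B + 1), d a) ^ U.card *
        ∑ j ∈ range (M + 1), sumLaw μ (Fintype.card ι - U.card) j := by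
  let e := Equiv.piEquivPiSubtypeProd (· ∈ U) fun _ : ι => Fin (B + 1)
  let g : ({i // i ∉ U} → Fin (B + 1)) → ℝ := fun z =>
    if ∑ i, (z i : ℕ) ≤ M then ∏ i, μ (z i) else 0
  have hsplit : ∀ x : ι → Fin (B + 1), (∏ i ∈ U, d (x i)) *
      (if ∑ i ∈ Uᶜ, (x i : ℕ) ≤ M then ∏ i ∈ Uᶜ, μ (x i) else 0) =
      (∏ i, d ((e x).1 i)) * g (e x).2 := by
    intro x
    rw [prod_subtype U fun _ => Iff.rfl, sum_subtype Uᶜ fun _ => mem_compl,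
      prod_subtype Uᶜ fun _ => mem_compl]
    rfl
  rw [sum_congr rfl fun x _ => hsplit x, e.sum_comp (fun p => (∏ i, d (p.1 i)) * g p.2),
    Fintype.sum_prod_type]
  dsimp only
  rw [← sum_mul_sum, ← Fintype.prod_sum fun (_ : U) (a : Fin (B + 1)) => d a,
    sum_pi_ite_sum_le hM, Fintype.card_subtype_compl, Fintype.card_coe, prod_const, card_univ,
    Fintype.card_coe, Fin.sum_univ_eq_sum_range d]

lemma iteratedDeriv_eval_zero {𝕜 : Type*} [NontriviallyNormedField 𝕜] (P : 𝕜[X]) (k : ℕ) :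
    iteratedDeriv k (fun x => P.eval x) 0 = k.factorial * P.coeff k := by
  have hiter : iteratedDeriv k (fun x => P.eval x) = fun x => (derivative^[k] P).eval x := by
    induction k with
    | zero => rfl
    | succ k ih =>
      ext x
      rw [iteratedDeriv_succ, ih, Polynomial.deriv, Function.iterate_succ_apply']
  simp only [hiter]
  rw [← coeff_zero_eq_eval_zero, coeff_iterate_derivative, zero_add,
    Nat.descFactorial_self, nsmul_eq_mul]

lemma coeff_prod_C_add_C_mul_X {ι R : Type*} [CommSemiring R] [DecidableEq ι] (s : Finset ι)
    (c b : ι → R) (k : ℕ) :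
    (∏ i ∈ s, (C (c i) + C (b i) * X)).coeff k =
      ∑ U ∈ s.powersetCard k, (∏ i ∈ U, b i) * ∏ i ∈ s \ U, c i := by
  have hterm : ∀ t : Finset ι, (∏ i ∈ t, C (b i) * X) * ∏ i ∈ s \ t, C (c i) =
      C ((∏ i ∈ t, b i) * ∏ i ∈ s \ t, c i) * X ^ t.card := by
    intro t
    rw [prod_mul_distrib, prod_const, ← map_prod C, ← map_prod C, map_mul]
    ring
  simp_rw [add_comm (C (c _)), prod_add, hterm, finsetSum_coeff, coeff_C_mul_X_pow,
    powersetCard_eq_filter, sum_filter, eq_comm]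

lemma abs_coeff_sum_prod_le {ι : Type*} [Fintype ι] [DecidableEq ι] {B : ℕ}
    (A : Finset (ι → Fin (B + 1))) (hA : ∀ x ∈ A, ∑ i, (x i : ℕ) ≤ B) {c : ℕ → ℝ}
    (hc : ∀ a, 0 ≤ c a) (b : ℕ → ℝ) (k : ℕ) :
    |(∑ x ∈ A, ∏ i, (C (c (x i)) + C (b (x i)) * X)).coeff k| ≤
      (Fintype.card ι).choose k * (∑ a ∈ range (B + 1), |b a|) ^ k *
        ∑ j ∈ range (B + 1), sumLaw c (Fintype.card ι - k) j := by
  have hterm : ∀ U ∈ (univ : Finset ι).powersetCard k, ∀ x ∈ A,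
      |(∏ i ∈ U, b (x i)) * ∏ i ∈ univ \ U, c (x i)| = (∏ i ∈ U, |b (x i)|) *
        (if ∑ i ∈ Uᶜ, (x i : ℕ) ≤ B then ∏ i ∈ Uᶜ, c (x i) else 0) := by
    intro U _ x hx
    rw [if_pos ((sum_le_sum_of_subset (subset_univ _)).trans (hA x hx)), abs_mul, abs_prod,
      abs_prod, ← compl_eq_univ_sdiff]
    simp_rw [abs_of_nonneg (hc _)]
  calc _ ≤ ∑ x ∈ A, ∑ U ∈ (univ : Finset ι).powersetCard k,
        |(∏ i ∈ U, b (x i)) * ∏ i ∈ univ \ U, c (x i)| := by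
        simp_rw [finsetSum_coeff, coeff_prod_C_add_C_mul_X]
        exact (abs_sum_le_sum_abs _ _).trans (sum_le_sum fun x _ => abs_sum_le_sum_abs _ _)
    _ ≤ ∑ U ∈ (univ : Finset ι).powersetCard k, ∑ x : ι → Fin (B + 1),
        (∏ i ∈ U, |b (x i)|) * (if ∑ i ∈ Uᶜ, (x i : ℕ) ≤ B then ∏ i ∈ Uᶜ, c (x i) else 0) := by
        rw [sum_comm]
        refine sum_le_sum fun U hU => ?_
        rw [sum_congr rfl (hterm U hU)]
        refine sum_le_sum_of_subset_of_nonneg (subset_univ A) fun x _ _ => ?_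
        exact mul_nonneg (prod_nonneg fun _ _ => abs_nonneg _)
          (by split_ifs; exacts [prod_nonneg fun _ _ => hc _, le_rfl])
    _ = _ := by
        rw [sum_congr rfl fun U _ => sum_pi_prod_mul_ite_sum_compl_le U le_rfl (|b ·|) c,
          sum_congr rfl fun U hU => by rw [(mem_powersetCard.mp hU).2], sum_const,
          card_powersetCard, card_univ, nsmul_eq_mul, mul_assoc]

def mixSlope (ν : ℕ → ℝ) : ℕ → ℝ := fun c => ν c - if c = 0 then 1 else 0

lemma mix_eq_add_mixSlope_mul (ν : ℕ → ℝ) (p q : ℝ) (c : ℕ) :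
    mix ν q c = mix ν p c + mixSlope ν c * (q - p) := by
  unfold mix mixSlope
  ring

lemma mix_nonneg {ν : ℕ → ℝ} (hν : ∀ k, 0 ≤ ν k) {p : ℝ} (hp0 : 0 ≤ p) (hp1 : p ≤ 1) (c : ℕ) :
    0 ≤ mix ν p c :=
  add_nonneg (mul_nonneg (sub_nonneg.2 hp1) (by split_ifs <;> norm_num)) (mul_nonneg hp0 (hν c))

lemma tsum_mix {ν : ℕ → ℝ} (hν : ∑' k, ν k = 1) (p : ℝ) : ∑' c, mix ν p c = 1 := by
  unfold mix
  rw [((hasSum_ite_eq 0 (1 : ℝ)).summable.mul_left _).tsum_add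
    ((summable_of_tsum_eq_one hν).mul_left _), tsum_mul_left, tsum_mul_left, tsum_ite_eq, hν]
  ring

lemma sum_abs_mixSlope_le_two {ν : ℕ → ℝ} (hνnn : ∀ k, 0 ≤ ν k) (hν : ∑' k, ν k = 1) (N : ℕ) :
    ∑ a ∈ range N, |mixSlope ν a| ≤ 2 := by
  calc _ ≤ ∑ a ∈ range N, (ν a + if a = 0 then 1 else 0) := by
        refine sum_le_sum fun a _ => (abs_sub _ _).trans_eq ?_
        rw [abs_of_nonneg (hνnn a), abs_of_nonneg (by split_ifs <;> norm_num)]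
    _ ≤ 1 + 1 := by
        rw [sum_add_distrib, sum_ite_eq']
        gcongr
        · exact hν ▸ (summable_of_tsum_eq_one hν).sum_le_tsum _ fun a _ => hνnn a
        · split_ifs <;> norm_num
    _ = 2 := one_add_one_eq_two

def drLawZeroTaylor (m : ℕ) (ν : ℕ → ℝ) (p : ℝ) (n : ℕ) : ℝ[X] :=
  ∑ x ∈ zeroConfigs m n, ∏ t, (C (mix ν p (x t)) + C (mixSlope ν (x t)) * X)

lemma drLaw_zero_eq_eval {m : ℕ} (hm : 2 ≤ m) {ν : ℕ → ℝ} (hνnn : ∀ k, 0 ≤ ν k)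
    (hνsum : ∑' k, ν k = 1) (p : ℝ) (n : ℕ) {q : ℝ} (hq : q ∈ Set.Icc (0 : ℝ) 1) :
    drLaw m ν q n 0 = (drLawZeroTaylor m ν p n).eval (q - p) := by
  rw [drLaw, drStep_iterate_zero_eq_sum hm (mix_nonneg hνnn hq.1 hq.2) (tsum_mix hνsum q),
    drLawZeroTaylor, eval_finsetSum]
  simp [eval_prod, mix_eq_add_mixSlope_mul ν p q]

lemma iteratedDeriv_drLaw_zero {m : ℕ} (hm : 2 ≤ m) {ν : ℕ → ℝ} (hνnn : ∀ k, 0 ≤ ν k)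
    (hνsum : ∑' k, ν k = 1) {p : ℝ} (hp : p ∈ Set.Ioo (0 : ℝ) 1) (k n : ℕ) :
    iteratedDeriv k (fun q => drLaw m ν q n 0) p =
      k.factorial * (drLawZeroTaylor m ν p n).coeff k := by
  rw [Filter.EventuallyEq.iteratedDeriv_eq k (Filter.eventually_of_mem (Icc_mem_nhds hp.1 hp.2)
    fun q hq => drLaw_zero_eq_eval hm hνnn hνsum p n hq), ← iteratedDeriv_eval_zero, ← sub_self p]
  exact congrFun (iteratedDeriv_comp_sub_const k (fun h => (drLawZeroTaylor m ν p n).eval h) p) p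

end DerridaRetaux

open DerridaRetaux

theorem deriv_PXn_zero_bound_two_general
    (m : ℕ) (hm : 2 ≤ m) (ν : ℕ → ℝ)
    (hνnn : ∀ k, 0 ≤ ν k) (hνsum : ∑' k, ν k = 1)
    (p : ℝ) (hp : p ∈ Set.Ioo (0 : ℝ) 1)
    (k : ℕ) (n : ℕ) :
    |iteratedDeriv k (fun q => drLaw m ν q n 0) p| ≤
      2 ^ k * (k.factorial : ℝ) * (m : ℝ) ^ (k * n) *
        ∑ j ∈ Finset.range (m ^ n + 1), sumLaw (mix ν p) (m ^ n - k) j := by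
  have hcoeff := abs_coeff_sum_prod_le (zeroConfigs m n)
    (fun _ hx => sum_le_pow_of_mem_zeroConfigs hm hx) (mix_nonneg hνnn hp.1.le hp.2.le)
    (mixSlope ν) k
  rw [Fintype.card_fun, Fintype.card_fin, Fintype.card_fin] at hcoeff
  have hchoose : ((m ^ n).choose k : ℝ) ≤ (m : ℝ) ^ (k * n) := by
    rw [mul_comm k, pow_mul]
    exact_mod_cast Nat.choose_le_pow _ _
  have hslope := pow_le_pow_left₀ (sum_nonneg fun a _ => abs_nonneg _)
    (sum_abs_mixSlope_le_two hνnn hνsum (m ^ n + 1)) k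
  have hS : 0 ≤ ∑ j ∈ range (m ^ n + 1), sumLaw (mix ν p) (m ^ n - k) j :=
    sum_nonneg fun j _ => sumLaw_nonneg (mix_nonneg hνnn hp.1.le hp.2.le) _ j
  rw [iteratedDeriv_drLaw_zero hm hνnn hνsum hp, abs_mul, Nat.abs_cast]
  calc _ ≤ (k.factorial : ℝ) * ((m ^ n).choose k * (∑ a ∈ range (m ^ n + 1), |mixSlope ν a|) ^ k *
        ∑ j ∈ range (m ^ n + 1), sumLaw (mix ν p) (m ^ n - k) j) := by gcongr; exact hcoeff
    _ ≤ k.factorial * ((m : ℝ) ^ (k * n) * 2 ^ k *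
        ∑ j ∈ range (m ^ n + 1), sumLaw (mix ν p) (m ^ n - k) j) := by gcongr
    _ = _ := by ring

/-- Proposition 2.2 (2). Fix `δ ∈ (0, 1/2)` and assume
`c_2 = E(m^{(1-δ)X_0^*}) < ∞`. Then for every `p ∈ (0,1)`, `k ≥ 1` and `n ≥ 1`,
`|dᵏ/dpᵏ P(X_n = 0)| ≤ 2^k k! m^{kn} P(Σ_{i=1}^{m^n - k} X_{0,i} ≤ m^n)`. -/
theorem deriv_PXn_zero_bound_two
    (m : ℕ) (hm : 2 ≤ m) (ν : ℕ → ℝ)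
    (hν0 : ν 0 = 0) (hνnn : ∀ k, 0 ≤ ν k) (hνsum : ∑' k, ν k = 1)
    (δ : ℝ) (hδ : δ ∈ Set.Ioo (0 : ℝ) (1 / 2))
    (hc2 : Summable fun j : ℕ => ν j * (m : ℝ) ^ ((1 - δ) * (j : ℝ)))
    (p : ℝ) (hp : p ∈ Set.Ioo (0 : ℝ) 1)
    (k : ℕ) (hk : 1 ≤ k) (n : ℕ) (hn : 1 ≤ n) :
    |iteratedDeriv k (fun q => drLaw m ν q n 0) p| ≤
      2 ^ k * (k.factorial : ℝ) * (m : ℝ) ^ (k * n) *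
        ∑ j ∈ Finset.range (m ^ n + 1), sumLaw (mix ν p) (m ^ n - k) j :=
  deriv_PXn_zero_bound_two_general m hm ν hνnn hνsum p hp k n
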